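/- Let R be a commutative ring and e₀=1, e₁, e₂, … ∈ R with e_m := 0 for m < 0. Fix l ≥ 1 and integers m₁,…,m_l ≥ 0. Let t₀ = t be a formal symbol and t_a (a ≥ 0) commuting shift elements in a (possibly noncommutative) R-algebra in which all the e's commute among themselves and the t's commute among themselves, satisfying the commutation rules e_j t_a = t_a e_j + t_{a+1} e_{j−1} for all a ≥ 0 and all j. Then (e_{m₁}⋯e_{m_l}) · t₀ = ∑_{a=0}^{l} t_a · ∑_{T ⊆ {1,…,l}, |T|=a} e_{m₁−ε₁(T)} ⋯ e_{m_l−ε_l(T)}, where ε_p(T) = 1 if p ∈ T and 0 otherwise. -/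

import Mathlib

open Finset

lemma powerset_map_aux {α β : Type*} (f : α ↪ β) (s : Finset α) :
    (s.map f).powerset = s.powerset.map ⟨Finset.map f, Finset.map_injective f⟩ := by
  ext T
  simp only [Finset.mem_powerset, Finset.mem_map, Function.Embedding.coeFn_mk,
    Finset.subset_map_iff]
  constructor
  · rintro ⟨u, hu, rfl⟩; exact ⟨u, hu, rfl⟩
  · rintro ⟨u, hu, rfl⟩; exact ⟨u, hu, rfl⟩

lemma e_t_aux {A : Type*} [Ring A]
    (e : ℤ → A) (t : ℕ → A)
    (hrel : ∀ (j : ℤ) (a : ℕ), e j * t a = t a * e j + t (a + 1) * e (j - 1)) :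
    ∀ (l : ℕ) (m : Fin l → ℤ),
    ((List.finRange l).map (fun p => e (m p))).prod * t 0
      = ∑ T ∈ (Finset.univ : Finset (Fin l)).powerset,
          t T.card * ((List.finRange l).map
            (fun p => e (m p - if p ∈ T then 1 else 0))).prod := by
  intro l
  induction l with
  | zero => intro m; simp
  | succ n ih =>
    intro m
    have hemb : (⟨Fin.succ, Fin.succ_injective n⟩ : Fin n ↪ Fin (n+1)) = _ := rfl
    set emb : Fin n ↪ Fin (n+1) := ⟨Fin.succ, Fin.succ_injective n⟩ with hembdef
    have h0 : (0 : Fin (n+1)) ∉ (Finset.univ : Finset (Fin n)).map emb := by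
      simp [hembdef, Fin.succ_ne_zero]
    conv_lhs => rw [List.finRange_succ]
    simp only [List.map_cons, List.prod_cons, List.map_map, Function.comp_def]
    rw [mul_assoc, ih (fun p => m p.succ), Finset.mul_sum]
    conv_rhs =>
      rw [Fin.univ_succ, Finset.cons_eq_insert, Finset.sum_powerset_insert h0,
        powerset_map_aux, Finset.sum_map, Finset.sum_map]
    rw [← Finset.sum_add_distrib]
    refine Finset.sum_congr rfl fun S hS => ?_
    have h0S : (0 : Fin (n+1)) ∉ S.map emb := by
      simp [hembdef, Fin.succ_ne_zero]
    have hmem : ∀ p : Fin n, (Fin.succ p ∈ S.map emb) = (p ∈ S) := by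
      intro p; simp [hembdef]
    have hmem' : ∀ p : Fin n, (Fin.succ p ∈ insert 0 (S.map emb)) = (p ∈ S) := by
      intro p; simp [Finset.mem_insert, Fin.succ_ne_zero, hmem p]
    simp only [Function.Embedding.coeFn_mk, List.finRange_succ, List.map_cons,
      List.prod_cons, List.map_map, Function.comp_def, Finset.card_map,
      Finset.card_insert_of_notMem h0S, hmem, hmem', if_neg h0S,
      Finset.mem_insert_self, if_pos, sub_zero]
    rw [← mul_assoc, hrel, add_mul, mul_assoc, mul_assoc]

/-- In a (possibly noncommutative) ring containing elements
`e_j` (`e₀ = 1`, `e_m = 0` for `m < 0`) commuting among themselves and elements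
`t_a` commuting among themselves, subject to `e_j t_a = t_a e_j + t_{a+1} e_{j−1}`,
one has for all `l ≥ 1` and `m₁,…,m_l ≥ 0`:
`(e_{m₁}⋯e_{m_l}) t₀ = ∑_{a=0}^{l} t_a ∑_{T ⊆ {1,…,l}, |T|=a}
  e_{m₁−ε₁(T)} ⋯ e_{m_l−ε_l(T)}`. -/
theorem e_product_commute_with_t
    (A : Type*) [Ring A]
    (e : ℤ → A) (he0 : e 0 = 1) (heneg : ∀ m : ℤ, m < 0 → e m = 0)
    (hecomm : ∀ i j : ℤ, e i * e j = e j * e i)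
    (t : ℕ → A)
    (htcomm : ∀ a b : ℕ, t a * t b = t b * t a)
    (hrel : ∀ (j : ℤ) (a : ℕ), e j * t a = t a * e j + t (a + 1) * e (j - 1))
    (l : ℕ) (hl : 1 ≤ l) (m : Fin l → ℕ) :
    ((List.finRange l).map (fun p => e ((m p : ℤ)))).prod * t 0
      = ∑ a ∈ Finset.range (l + 1), t a *
          ∑ T ∈ Finset.powersetCard a (Finset.univ : Finset (Fin l)),
            ((List.finRange l).map
              (fun p => e ((m p : ℤ) - if p ∈ T then 1 else 0))).prod := by
  rw [e_t_aux e t hrel l (fun p => (m p : ℤ)), Finset.sum_powerset]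
  rw [Finset.card_univ, Fintype.card_fin]
  refine Finset.sum_congr rfl fun a ha => ?_
  rw [Finset.mul_sum]
  refine Finset.sum_congr rfl fun T hT => ?_
  rw [(Finset.mem_powersetCard.1 hT).2]
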